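/- arXiv:2011.13396 — 2 statements merged into one kernel-verified Lean document; each statement's English description precedes it below -/
import Mathlib

section
/- If the i-th statement in a straight-line trace is downward exposed (no succeeding statement assigns to its left-hand side variable), then in every state produced by backward-executing statements s_n down to s_{i+1} from the postcondition, the value of that variable equals its value in the postcondition. -/
/-- An assignment statement over variables `V` valued in `D`. -/
structure Stmt (V D : Type) where
  lhs : V
  rhs : (V → D) → D

/-- Backward execution ∇ of a suffix of a trace, processing statements from the
last one down to the first one of the suffix.  The input list is the suffix in
*reversed* order (head = last statement, processed first).  A statement whose
left-hand side is downward exposed relative to the remaining statements keeps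
the variable's value (the state is preserved); otherwise the state is split by
assigning the variable every possible value. -/
def backAux {V D : Type} [DecidableEq V] : List (Stmt V D) → (V → D) → Set (V → D)
  | [], σ => {σ}
  | s :: rest, σ =>
    if ∀ u ∈ rest, u.lhs ≠ s.lhs then
      backAux rest σ
    else
      ⋃ d : D, backAux rest (Function.update σ s.lhs d)

/-- Backward execution of a suffix `L` (given in program order) from a state. -/
def backRun {V D : Type} [DecidableEq V] (L : List (Stmt V D)) (σ : V → D) :
    Set (V → D) :=
  backAux L.reverse σ

theorem apply_eq_of_mem_backAux {V D : Type} [DecidableEq V] {x : V} :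
    ∀ {L : List (Stmt V D)} {σ τ : V → D},
      (∀ s ∈ L, s.lhs ≠ x) → τ ∈ backAux L σ → τ x = σ x
  | [], σ, τ, _, hτ => by rw [backAux, Set.mem_singleton_iff] at hτ; rw [hτ]
  | s :: rest, σ, τ, hL, hτ => by
    have hrest : ∀ u ∈ rest, u.lhs ≠ x := fun u hu => hL u (List.mem_cons_of_mem s hu)
    rw [backAux] at hτ
    split_ifs at hτ
    · exact apply_eq_of_mem_backAux hrest hτ
    · obtain ⟨d, hd⟩ := Set.mem_iUnion.mp hτ
      rw [apply_eq_of_mem_backAux hrest hd]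
      exact Function.update_of_ne (hL s List.mem_cons_self).symm _ _

theorem apply_eq_of_mem_backRun {V D : Type} [DecidableEq V] {x : V}
    {L : List (Stmt V D)} {σ τ : V → D} (hL : ∀ s ∈ L, s.lhs ≠ x)
    (hτ : τ ∈ backRun L σ) : τ x = σ x :=
  apply_eq_of_mem_backAux (fun s hs => hL s (List.mem_reverse.mp hs)) hτ

/-- if the i-th statement is downward exposed (no succeeding
statement assigns to its left-hand side variable), then in every state produced
by backward-executing the statements s_n down to s_{i+1} from the
postcondition, the value of that variable equals its value in the
postcondition. -/
theorem downward_exposed_value_eq_post {V D : Type} [DecidableEq V]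
    (t : List (Stmt V D)) (i : ℕ) (hi : i < t.length) (post : V → D)
    (hdown : ∀ s ∈ t.drop (i + 1), s.lhs ≠ (t.get ⟨i, hi⟩).lhs) :
    ∀ τ ∈ backRun (t.drop (i + 1)) post,
      τ (t.get ⟨i, hi⟩).lhs = post (t.get ⟨i, hi⟩).lhs :=
  fun _ hτ => apply_eq_of_mem_backRun hdown hτ
end

section
/- In a trace whose statements are pairwise semantically independent (left-hand side variables are distinct and no right-hand side reads a variable assigned by another statement), if exactly one statement s_i is buggy (its forward semantics differ from the correct semantics on the precondition-reachable state), then the per-position difference between the forward execution of the buggy trace and the forward execution of the correct trace is zero at positions 0,...,i−1 and equals exactly 1 (the single disagreeing variable) at positions i,...,n. -/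
def exec {V D : Type} [DecidableEq V] (s : Stmt V D) (σ : V → D) : V → D :=
  Function.update σ s.lhs (s.rhs σ)

/-- Forward execution from a precondition. -/
def run {V D : Type} [DecidableEq V] (σ : V → D) (t : List (Stmt V D)) : V → D :=
  t.foldl (fun σ s => exec s σ) σ

/-- The difference between two states: the number of variables on which they
disagree. -/
def diff {V D : Type} [Fintype V] [DecidableEq D] (σ τ : V → D) : ℕ :=
  (Finset.univ.filter fun v => σ v ≠ τ v).card

/-- `s` reads variable `x` if its right-hand side can depend on `x`. -/
def Reads {V D : Type} [DecidableEq V] (s : Stmt V D) (x : V) : Prop :=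
  ∃ (σ : V → D) (d : D), s.rhs (Function.update σ x d) ≠ s.rhs σ

/-!
Before the buggy statement the two executed prefixes coincide. The buggy statement makes the
states differ exactly at its left-hand side `x`, and every later statement neither writes `x`
(distinct left-hand sides) nor reads it, so it preserves "equal off `x`, different at `x`".
-/

variable {V D : Type}

def DiffersOnlyAt (x : V) (σ τ : V → D) : Prop :=
  σ x ≠ τ x ∧ ∀ v ≠ x, σ v = τ v

theorem diff_self [Fintype V] [DecidableEq D] (σ : V → D) : diff σ σ = 0 := by
  simp [diff]

theorem DiffersOnlyAt.diff_eq_one [Fintype V] [DecidableEq D] {x : V} {σ τ : V → D}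
    (h : DiffersOnlyAt x σ τ) : diff σ τ = 1 := by
  refine Finset.card_eq_one.mpr ⟨x, Finset.ext fun v => ?_⟩
  simp only [Finset.mem_filter, Finset.mem_univ, true_and, Finset.mem_singleton]
  exact ⟨not_imp_comm.mp (h.2 v), fun hv => hv ▸ h.1⟩

theorem getElem_lhs_ne_of_nodup {l : List (Stmt V D)} (hl : (l.map Stmt.lhs).Nodup) {j k : ℕ}
    (hj : j < l.length) (hk : k < l.length) (hjk : j ≠ k) : l[j].lhs ≠ l[k].lhs :=
  fun h => hjk ((hl.getElem_inj_iff (hi := by simpa) (hj := by simpa)).mp (by simpa using h))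

variable [DecidableEq V]

theorem Stmt.rhs_eq_of_not_reads {s : Stmt V D} {x : V} (hs : ¬ Reads s x) {σ τ : V → D}
    (hστ : ∀ v ≠ x, σ v = τ v) : s.rhs σ = s.rhs τ := by
  have hσ : σ = Function.update τ x (σ x) := by
    funext v
    by_cases hv : v = x
    · subst hv; simp
    · simp [hv, hστ v hv]
  simp only [Reads, not_exists, not_not] at hs
  rw [hσ, hs]

theorem differsOnlyAt_exec_of_rhs_ne {s t : Stmt V D} (hlhs : s.lhs = t.lhs) {σ : V → D}
    (hrhs : s.rhs σ ≠ t.rhs σ) : DiffersOnlyAt s.lhs (exec s σ) (exec t σ) := by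
  refine ⟨by simpa [exec, hlhs] using hrhs, fun v hv => ?_⟩
  simp [exec, hv, hlhs ▸ hv]

theorem DiffersOnlyAt.exec {x : V} {σ τ : V → D} (h : DiffersOnlyAt x σ τ) {s : Stmt V D}
    (hw : s.lhs ≠ x) (hr : ¬ Reads s x) : DiffersOnlyAt x (exec s σ) (exec s τ) := by
  refine ⟨by simpa [_root_.exec, hw.symm] using h.1, fun v hv => ?_⟩
  by_cases hvs : v = s.lhs
  · subst hvs; simp [_root_.exec, Stmt.rhs_eq_of_not_reads hr h.2]
  · simp [_root_.exec, hvs, h.2 v hv]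

theorem run_take_succ (σ : V → D) (l : List (Stmt V D)) {k : ℕ} (hk : k < l.length) :
    run σ (l.take (k + 1)) = exec l[k] (run σ (l.take k)) := by
  rw [List.take_succ_eq_append_getElem hk, run, List.foldl_append]
  rfl

/-- in a trace of pairwise semantically independent statements
(distinct left-hand sides and no right-hand side reads a variable assigned by
another statement), if exactly one statement s_i is buggy (its forward
semantics differ from the correct one on the precondition-reachable state),
then the per-position difference between the forward executions of the buggy
and correct traces is 0 at positions 0,…,i and exactly 1 at positions
i+1,…,n (0-indexed statements: the buggy statement executes between
positions i and i+1). -/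
theorem single_bug_independent_diff {V D : Type} [DecidableEq V] [Fintype V] [DecidableEq D]
    (P Q : List (Stmt V D)) (pre : V → D) (i : ℕ)
    (hlen : P.length = Q.length) (hi : i < P.length)
    (heq : ∀ (j : ℕ) (hj : j < P.length), j ≠ i → P[j] = Q[j]'(by omega))
    (hlhs : (P[i]'hi).lhs = (Q[i]'(by omega)).lhs)
    (hnodupP : (P.map Stmt.lhs).Nodup)
    (hindP : ∀ (j k : ℕ) (hj : j < P.length) (hk : k < P.length), j ≠ k →
      ¬ Reads (P[j]'hj) ((P[k]'hk).lhs))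
    (hbug : (P[i]'hi).rhs (run pre (P.take i)) ≠ (Q[i]'(by omega)).rhs (run pre (Q.take i))) :
    ∀ m ≤ P.length,
      (m ≤ i → diff (run pre (P.take m)) (run pre (Q.take m)) = 0) ∧
      (i < m → diff (run pre (P.take m)) (run pre (Q.take m)) = 1) := by
  have hprefix : ∀ m ≤ i, P.take m = Q.take m := fun m hm =>
    List.ext_getElem (by simp [hlen]) fun j hjP _ => by
      rw [List.length_take] at hjP
      simp only [List.getElem_take]
      exact heq j (by omega) (by omega)
  have hafter : ∀ m, i < m → m ≤ P.length →
      DiffersOnlyAt P[i].lhs (run pre (P.take m)) (run pre (Q.take m)) := by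
    intro m him
    induction m, him using Nat.le_induction with
    | base =>
      intro _
      rw [hprefix i le_rfl] at hbug
      rw [run_take_succ pre P hi, run_take_succ pre Q (hlen ▸ hi), hprefix i le_rfl]
      exact differsOnlyAt_exec_of_rhs_ne hlhs hbug
    | succ k hik ih =>
      intro hk
      rw [run_take_succ pre P hk, run_take_succ pre Q (by omega), ← heq k hk (by omega)]
      exact (ih (by omega)).exec (getElem_lhs_ne_of_nodup hnodupP hk hi (by omega))
        (hindP k i hk hi (by omega))
  intro m hm
  refine ⟨fun hmi => ?_, fun him => (hafter m him hm).diff_eq_one⟩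
  rw [hprefix m hmi]
  exact diff_self _
end
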